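/- The softmax function on ℝ^n, defined by softmax(u)ᵢ = exp(uᵢ)/∑ⱼ exp(uⱼ), is Lipschitz continuous with Lipschitz constant 1 with respect to the Euclidean norm: ‖softmax(u) − softmax(u')‖ ≤ ‖u − u'‖ for all u, u' ∈ ℝ^n. -/

import Mathlib

set_option maxHeartbeats 1000000
noncomputable def softmax {n : ℕ} (u : EuclideanSpace ℝ (Fin n)) : EuclideanSpace ℝ (Fin n) :=
  WithLp.toLp 2 (fun i => Real.exp (u i) / ∑ j, Real.exp (u j))

section aux

variable {n : ℕ}

open Finset Real

private noncomputable def smD (x : EuclideanSpace ℝ (Fin n)) :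
    EuclideanSpace ℝ (Fin n) →L[ℝ] EuclideanSpace ℝ (Fin n) :=
  ((EuclideanSpace.equiv (Fin n) ℝ).symm.toContinuousLinearMap).comp
    (ContinuousLinearMap.pi fun i =>
      softmax x i • ((EuclideanSpace.proj i : EuclideanSpace ℝ (Fin n) →L[ℝ] ℝ)
        - ∑ j, softmax x j • (EuclideanSpace.proj j : EuclideanSpace ℝ (Fin n) →L[ℝ] ℝ)))

private lemma smD_apply (x v : EuclideanSpace ℝ (Fin n)) (i : Fin n) :
    smD x v i = softmax x i * (v i - ∑ j, softmax x j * v j) := by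
  simp [smD, ContinuousLinearMap.sum_apply, mul_sub]

variable [NeZero n]

private lemma S_pos (x : EuclideanSpace ℝ (Fin n)) : 0 < ∑ j, Real.exp (x j) :=
  Finset.sum_pos (fun j _ => Real.exp_pos _) ⟨⟨0, Nat.pos_of_neZero n⟩, Finset.mem_univ _⟩

private lemma softmax_nonneg (x : EuclideanSpace ℝ (Fin n)) (i : Fin n) : 0 ≤ softmax x i :=
  by exact div_nonneg (Real.exp_pos _).le (S_pos x).le

private lemma softmax_le_one (x : EuclideanSpace ℝ (Fin n)) (i : Fin n) : softmax x i ≤ 1 := by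
  rw [softmax, WithLp.ofLp_toLp, div_le_one (S_pos x)]
  exact Finset.single_le_sum (fun j _ => (Real.exp_pos (x j)).le) (Finset.mem_univ i)

private lemma hasFDerivAt_softmax (x : EuclideanSpace ℝ (Fin n)) :
    HasFDerivAt softmax (smD x) x := by
  set S : EuclideanSpace ℝ (Fin n) → ℝ := fun u => ∑ j, Real.exp (u j) with hSdef
  have hS0 : S x ≠ 0 := (S_pos x).ne'
  have hproj : ∀ i, HasFDerivAt (fun u : EuclideanSpace ℝ (Fin n) => u i)
      (EuclideanSpace.proj i : EuclideanSpace ℝ (Fin n) →L[ℝ] ℝ) x := fun i =>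
    ((EuclideanSpace.proj i : EuclideanSpace ℝ (Fin n) →L[ℝ] ℝ)).hasFDerivAt
  have hexp : ∀ i, HasFDerivAt (fun u : EuclideanSpace ℝ (Fin n) => Real.exp (u i))
      (Real.exp (x i) • (EuclideanSpace.proj i : EuclideanSpace ℝ (Fin n) →L[ℝ] ℝ)) x :=
    fun i => (Real.hasDerivAt_exp (x i)).comp_hasFDerivAt (f := fun u : EuclideanSpace ℝ (Fin n) => u i) x (hproj i)
  have hS : HasFDerivAt S (∑ j, Real.exp (x j) • (EuclideanSpace.proj j :
      EuclideanSpace ℝ (Fin n) →L[ℝ] ℝ)) x := HasFDerivAt.fun_sum (fun j _ => hexp j)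
  have hinv : HasFDerivAt (fun u => (S u)⁻¹)
      ((-(S x ^ 2)⁻¹) • ∑ j, Real.exp (x j) • (EuclideanSpace.proj j :
        EuclideanSpace ℝ (Fin n) →L[ℝ] ℝ)) x :=
    (hasDerivAt_inv hS0).comp_hasFDerivAt x hS
  have hcomp : ∀ i, HasFDerivAt (fun u : EuclideanSpace ℝ (Fin n) => Real.exp (u i) * (S u)⁻¹)
      (Real.exp (x i) • ((-(S x ^ 2)⁻¹) • ∑ j, Real.exp (x j) • (EuclideanSpace.proj j :
        EuclideanSpace ℝ (Fin n) →L[ℝ] ℝ))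
       + (S x)⁻¹ • (Real.exp (x i) • (EuclideanSpace.proj i :
        EuclideanSpace ℝ (Fin n) →L[ℝ] ℝ))) x := fun i => (hexp i).mul hinv
  have hg : HasFDerivAt (fun u : EuclideanSpace ℝ (Fin n) => (fun i => Real.exp (u i) * (S u)⁻¹ : Fin n → ℝ))
      (ContinuousLinearMap.pi fun i =>
        Real.exp (x i) • ((-(S x ^ 2)⁻¹) • ∑ j, Real.exp (x j) • (EuclideanSpace.proj j :
          EuclideanSpace ℝ (Fin n) →L[ℝ] ℝ))
         + (S x)⁻¹ • (Real.exp (x i) • (EuclideanSpace.proj i :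
          EuclideanSpace ℝ (Fin n) →L[ℝ] ℝ))) x := by
    apply hasFDerivAt_pi''
    intro i
    rw [ContinuousLinearMap.proj_pi]
    exact hcomp i
  have hfull := ((EuclideanSpace.equiv (Fin n) ℝ).symm.toContinuousLinearMap.hasFDerivAt).comp x hg
  have hfull2 := hfull.congr_of_eventuallyEq (f₁ := softmax)
    (Filter.Eventually.of_forall fun u => by
      ext i
      simp [softmax, div_eq_mul_inv, Function.comp, hSdef])
  refine hfull2.congr_fderiv (Eq.symm ?_)
  refine ContinuousLinearMap.ext fun v => ?_
  refine PiLp.ext fun i => ?_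
  have h1 : smD x v i = softmax x i * (v i - ∑ j, softmax x j * v j) := smD_apply x v i
  rw [h1]
  have hSx : ∑ j, Real.exp (x j) = S x := rfl
  simp only [ContinuousLinearMap.coe_comp', Function.comp_apply,
    ContinuousLinearEquiv.coe_coe, PiLp.continuousLinearEquiv_symm_apply, WithLp.ofLp_toLp,
    ContinuousLinearMap.pi_apply, ContinuousLinearMap.add_apply,
    ContinuousLinearMap.smul_apply, ContinuousLinearMap.sum_apply,
    PiLp.proj_apply, smul_eq_mul, softmax, hSx]
  have hsum : ∑ j, Real.exp (x j) / S x * v j = (∑ j, Real.exp (x j) * v j) / S x := by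
    rw [Finset.sum_div]; exact Finset.sum_congr rfl fun j _ => by ring
  rw [hsum]
  have hS0 : S x ≠ 0 := (S_pos x).ne'
  field_simp
  ring

private lemma softmax_sum_one (x : EuclideanSpace ℝ (Fin n)) : ∑ i, softmax x i = 1 := by
  rw [show ∑ i, softmax x i = (∑ i, Real.exp (x i)) / (∑ j, Real.exp (x j)) by
    rw [Finset.sum_div]; simp [softmax]]
  exact div_self (S_pos x).ne'

private lemma smD_norm_le (x : EuclideanSpace ℝ (Fin n)) : ‖smD x‖ ≤ 1 := by
  refine ContinuousLinearMap.opNorm_le_bound _ zero_le_one fun v => ?_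
  rw [one_mul, EuclideanSpace.norm_eq, EuclideanSpace.norm_eq]
  apply Real.sqrt_le_sqrt
  set s := ∑ j, softmax x j * v j with hs
  have hp0 := softmax_nonneg x
  have hp1 := softmax_le_one x
  calc ∑ i, ‖smD x v i‖ ^ 2
      = ∑ i, (softmax x i) ^ 2 * (v i - s) ^ 2 := by
        refine Finset.sum_congr rfl fun i _ => ?_
        rw [smD_apply, Real.norm_eq_abs, sq_abs, mul_pow, ← hs]
    _ ≤ ∑ i, softmax x i * (v i - s) ^ 2 :=
        Finset.sum_le_sum fun i _ => by
          have h := mul_le_mul_of_nonneg_right (hp1 i)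
            (mul_nonneg (hp0 i) (sq_nonneg (v i - s)))
          nlinarith [h]
    _ = ∑ i, (softmax x i * v i ^ 2 - 2 * s * (softmax x i * v i) + s ^ 2 * softmax x i) :=
        Finset.sum_congr rfl fun i _ => by ring
    _ = (∑ i, softmax x i * v i ^ 2) - 2 * s * s + s ^ 2 * 1 := by
        rw [Finset.sum_add_distrib, Finset.sum_sub_distrib, ← Finset.mul_sum, ← Finset.mul_sum,
          softmax_sum_one, hs]
    _ ≤ ∑ i, v i ^ 2 := by
        have h := Finset.sum_le_sum (s := Finset.univ)
          (fun i (_ : i ∈ Finset.univ) => by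
            have h := mul_le_mul_of_nonneg_right (hp1 i) (sq_nonneg (v i))
            nlinarith [h] :
            ∀ i ∈ Finset.univ, softmax x i * v i ^ 2 ≤ v i ^ 2)
        nlinarith [sq_nonneg s]
    _ = ∑ i, ‖v i‖ ^ 2 := by simp [Real.norm_eq_abs, sq_abs]

end aux

theorem softmax_lipschitz_one {n : ℕ} (u u' : EuclideanSpace ℝ (Fin n)) :
    ‖softmax u - softmax u'‖ ≤ ‖u - u'‖ := by
  rcases Nat.eq_zero_or_pos n with hn | hn
  · subst hn
    have h0 : softmax u - softmax u' = 0 := Subsingleton.elim _ _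
    rw [h0, norm_zero]
    positivity
  · haveI : NeZero n := ⟨hn.ne'⟩
    have h := convex_univ.norm_image_sub_le_of_norm_hasFDerivWithin_le
      (f := softmax) (f' := smD) (C := 1) (s := Set.univ)
      (fun x _ => (hasFDerivAt_softmax x).hasFDerivWithinAt)
      (fun x _ => smD_norm_le x) (Set.mem_univ u') (Set.mem_univ u)
    simpa using h
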